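/- There is no assignment of predetermined outputs for the 16 Pauli measurements M'_1,…,M'_16 on the 5-cycle graph state, where each vertex's output is a ±1 value depending on its own Pauli setting and those of its two neighbors, reproducing the quantum outcomes: the submeasurement of M'_1 = X₁X₂X₃X₄X₅ (all outputs kept) yields −1, and each of the 15 rotated submeasurements of X₁Y₃Y₄ (from X₁X₂Y₃Y₄X₅), Y₁X₂X₃Y₄ (from Y₁X₂X₃Y₄Y₅), and Y₁X₂X₃Y₄ (from Y₁X₂X₃Y₄X₅) under the five cyclic rotations yields +1. -/

import Mathlib

inductive Pauli | I | X | Y | Z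
deriving DecidableEq

open Pauli

/-- Settings of the measurement `M'_{2+k}` (before rotation): `X₁X₂Y₃Y₄X₅`. -/
def base1 : Fin 5 → Pauli := ![X, X, Y, Y, X]

/-- Kept outputs for `M'_{2+k}`: submeasurement `X₁Y₃Y₄`. -/
def keep1 : Fin 5 → Bool := ![true, false, true, true, false]

/-- Settings of `M'_{7+k}`: `Y₁X₂X₃Y₄Y₅`. -/
def base2 : Fin 5 → Pauli := ![Y, X, X, Y, Y]

/-- Settings of `M'_{12+k}`: `Y₁X₂X₃Y₄X₅`. -/
def base3 : Fin 5 → Pauli := ![Y, X, X, Y, X]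

/-- Kept outputs for `M'_{7+k}` and `M'_{12+k}`: submeasurement `Y₁X₂X₃Y₄`. -/
def keep23 : Fin 5 → Bool := ![true, true, true, true, false]

/-! Multiply the fifteen `+1` predictions. A local value `h v a b c` with `(a, b, c) ≠ (X, X, X)`
enters this product an even number of times and each `h v X X X` an odd number of times, so since
`h v t ^ 2 = 1` the product is the prediction `∏ v, h v X X X = -1` for `X₁X₂X₃X₄X₅`, yet it is `1`. -/

instance : Fintype Pauli where
  elems := {I, X, Y, Z}
  complete a := by cases a <;> simp

open Finset

structure Measurement (n : ℕ) where
  setting : Fin n → Pauli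
  keep : Fin n → Bool

namespace Measurement

variable {n : ℕ}

def rotate (m : Measurement n) (k : Fin n) : Measurement n :=
  ⟨fun v => m.setting (v - k), fun v => m.keep (v - k)⟩

variable [NeZero n]

def localSetting (m : Measurement n) (v : Fin n) : Pauli × Pauli × Pauli :=
  (m.setting v, m.setting (v - 1), m.setting (v + 1))

def multiplicity {ι : Type*} [Fintype ι] (ms : ι → Measurement n) (v : Fin n)
    (t : Pauli × Pauli × Pauli) : ℕ :=
  #{i | (ms i).keep v ∧ (ms i).localSetting v = t}

variable {M : Type*} [CommMonoid M]

def predict (m : Measurement n) (h : Fin n → Pauli × Pauli × Pauli → M) : M :=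
  ∏ v, if m.keep v then h v (m.localSetting v) else 1

theorem prod_predict {ι : Type*} [Fintype ι] (ms : ι → Measurement n)
    (h : Fin n → Pauli × Pauli × Pauli → M) :
    ∏ i, (ms i).predict h = ∏ v, ∏ t, h v t ^ multiplicity ms v t := by
  simp only [predict]
  rw [Finset.prod_comm]
  refine Finset.prod_congr rfl fun v _ => ?_
  rw [← prod_filter, ← prod_fiberwise' _ (fun i => (ms i).localSetting v) (h v)]
  simp only [prod_const, filter_filter, multiplicity]

theorem prod_predict_of_multiplicity_mod_two {ι : Type*} [Fintype ι] (ms : ι → Measurement n)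
    (h : Fin n → Pauli × Pauli × Pauli → M) (hsq : ∀ v t, h v t ^ 2 = 1)
    (t₀ : Pauli × Pauli × Pauli)
    (hmult : ∀ v t, multiplicity ms v t % 2 = if t = t₀ then 1 else 0) :
    ∏ i, (ms i).predict h = ∏ v, h v t₀ := by
  rw [prod_predict]
  refine Finset.prod_congr rfl fun v _ => ?_
  calc ∏ t, h v t ^ multiplicity ms v t = ∏ t, h v t ^ (if t = t₀ then 1 else 0) :=
        Finset.prod_congr rfl fun t _ => by rw [pow_eq_pow_mod _ (hsq v t), hmult]
    _ = h v t₀ := by simp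

end Measurement

open Measurement

/-- The fifteen measurements `M'_2, …, M'_16`, indexed by base measurement and rotation. -/
def rotatedMeasurements : Fin 3 × Fin 5 → Measurement 5
  | (j, k) => (![Measurement.mk base1 keep1, ⟨base2, keep23⟩, ⟨base3, keep23⟩] j).rotate k

theorem multiplicity_rotatedMeasurements_mod_two (v : Fin 5) (t : Pauli × Pauli × Pauli) :
    multiplicity rotatedMeasurements v t % 2 = if t = (X, X, X) then 1 else 0 := by
  revert v t
  decide

/-- No 1-LHV* model on the 5-cycle (each vertex's ±1 output depending on its own
Pauli setting and those of its two neighbours) reproduces the quantum outcomes of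
the 16 measurements: `X₁X₂X₃X₄X₅` yields `-1` and the 15 rotated submeasurements
yield `+1`. -/
theorem stmt13 : ¬ ∃ h : Fin 5 → Pauli → Pauli → Pauli → ℤ,
    (∀ v a b c, h v a b c = 1 ∨ h v a b c = -1) ∧
    (∏ v : Fin 5, h v X X X) = -1 ∧
    (∀ k : Fin 5,
      (∏ v : Fin 5, if keep1 (v - k) then
          h v (base1 (v - k)) (base1 (v - 1 - k)) (base1 (v + 1 - k)) else 1) = 1) ∧
    (∀ k : Fin 5,
      (∏ v : Fin 5, if keep23 (v - k) then
          h v (base2 (v - k)) (base2 (v - 1 - k)) (base2 (v + 1 - k)) else 1) = 1) ∧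
    (∀ k : Fin 5,
      (∏ v : Fin 5, if keep23 (v - k) then
          h v (base3 (v - k)) (base3 (v - 1 - k)) (base3 (v + 1 - k)) else 1) = 1) := by
  rintro ⟨h, hpm, hXXX, h1, h2, h3⟩
  let H : Fin 5 → Pauli × Pauli × Pauli → ℤ := fun v t => h v t.1 t.2.1 t.2.2
  have hsq : ∀ v t, H v t ^ 2 = 1 := fun v t => by
    rcases hpm v t.1 t.2.1 t.2.2 with e | e <;> simp [H, e]
  have hone : ∀ jk, (rotatedMeasurements jk).predict H = 1 := by
    rintro ⟨j, k⟩
    fin_cases j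
    exacts [h1 k, h2 k, h3 k]
  have hprod := prod_predict_of_multiplicity_mod_two rotatedMeasurements H hsq (X, X, X)
    multiplicity_rotatedMeasurements_mod_two
  simp only [hone, prod_const_one] at hprod
  exact absurd (hprod.trans hXXX) (by decide)
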